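/- arXiv:1303.1404 — 2 statements merged into one kernel-verified Lean document; each statement's English description precedes it below -/
import Mathlib

section
/- Let O be a discrete valuation ring, Δ a finite abelian group, and R = O[Δ] the group algebra. Let M be an R-module which, as an O-module, is free of rank n·|Δ| for some n ≥ 1, and suppose M is generated as an R-module by n elements x_1, …, x_n. Then x_1, …, x_n admit no nontrivial R-linear relation; that is, (x_1, …, x_n) is an R-basis of M, and M is a free R-module of rank n. -/
/-!
The generators give a surjection `R^n → M` of `R`-modules, `R = O[Δ]`. As `O`-modules both
sides are free of rank `n·|Δ|`, so after identifying them this surjection becomes a surjective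
endomorphism of a finitely generated module over the commutative ring `O`, which is injective
(Vasconcelos).
-/

open Function Submodule

theorem linearIndependent_of_span_eq_top_of_linearEquiv_pi
    {O R M ι : Type*} [CommSemiring O] [OrzechProperty O] [Semiring R] [Algebra O R]
    [Module.Finite O R] [AddCommMonoid M] [Module R M] [Module O M] [IsScalarTower O R M]
    [Fintype ι] {x : ι → M} (hx : span R (Set.range x) = ⊤) (e : M ≃ₗ[O] (ι → R)) :
    LinearIndependent R x := by
  rw [linearIndependent_iff_injective_fintypeLinearCombination]
  have hsurj : Surjective (Fintype.linearCombination R x) := by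
    rw [← LinearMap.range_eq_top, Fintype.range_linearCombination, hx]
  have hendo : Injective (e ∘ Fintype.linearCombination R x) :=
    OrzechProperty.injective_of_surjective_endomorphism
      (e.toLinearMap ∘ₗ (Fintype.linearCombination R x).restrictScalars O)
      (e.surjective.comp hsurj)
  exact hendo.of_comp

noncomputable def MonoidAlgebra.piBasis (k G ι : Type*) [Semiring k] [Fintype ι] :
    Module.Basis (ι × G) k (ι → MonoidAlgebra k G) :=
  (Pi.basis fun _ : ι => MonoidAlgebra.basis G k).reindex (Equiv.sigmaEquivProd ι G)

theorem group_algebra_free_of_generators_of_rank_general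
    {O : Type*} [CommRing O]
    {Δ : Type*} [CommGroup Δ] [Fintype Δ]
    {M : Type*} [AddCommGroup M] [Module (MonoidAlgebra O Δ) M]
    [Module O M] [IsScalarTower O (MonoidAlgebra O Δ) M]
    {n : ℕ}
    (hfree : Nonempty (Module.Basis (Fin (n * Fintype.card Δ)) O M))
    (x : Fin n → M)
    (hgen : Submodule.span (MonoidAlgebra O Δ) (Set.range x) = ⊤) :
    LinearIndependent (MonoidAlgebra O Δ) x ∧
      ∃ b : Module.Basis (Fin n) (MonoidAlgebra O Δ) M, ∀ i, b i = x i := by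
  obtain ⟨bM⟩ := hfree
  have : Module.Finite O (MonoidAlgebra O Δ) := .of_basis (MonoidAlgebra.basis Δ O)
  let index : Fin (n * Fintype.card Δ) ≃ Fin n × Δ :=
    finProdFinEquiv.symm.trans ((Equiv.refl _).prodCongr (Fintype.equivFin Δ).symm)
  have hli := linearIndependent_of_span_eq_top_of_linearEquiv_pi hgen
    (bM.equiv (MonoidAlgebra.piBasis O Δ (Fin n)) index)
  exact ⟨hli, Module.Basis.mk hli hgen.ge, Module.Basis.mk_apply hli hgen.ge⟩

/-- The algebraic core of Proposition 2.4 of the paper: let `O` be a discrete valuation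
ring, `Δ` a finite abelian group and `R = O[Δ]` the group algebra.  If `M` is an
`R`-module which is free of rank `n * |Δ|` as an `O`-module (`n ≥ 1`) and which is
generated over `R` by elements `x 0, …, x (n-1)`, then the `x i` admit no nontrivial
`R`-linear relation: they are `R`-linearly independent and form an `R`-basis of `M`,
so that `M` is a free `R`-module of rank `n`. -/
theorem group_algebra_free_of_generators_of_rank
    {O : Type*} [CommRing O] [IsDomain O] [IsDiscreteValuationRing O]
    {Δ : Type*} [CommGroup Δ] [Fintype Δ]
    {M : Type*} [AddCommGroup M] [Module (MonoidAlgebra O Δ) M]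
    [Module O M] [IsScalarTower O (MonoidAlgebra O Δ) M]
    {n : ℕ} (hn : 1 ≤ n)
    (hfree : Nonempty (Module.Basis (Fin (n * Fintype.card Δ)) O M))
    (x : Fin n → M)
    (hgen : Submodule.span (MonoidAlgebra O Δ) (Set.range x) = ⊤) :
    LinearIndependent (MonoidAlgebra O Δ) x ∧
      ∃ b : Module.Basis (Fin n) (MonoidAlgebra O Δ) M, ∀ i, b i = x i :=
  group_algebra_free_of_generators_of_rank_general hfree x hgen
end

section
/- Let R be a commutative local ring, H a free R-module of rank r ≥ 1, and L ⊆ H a free rank-one direct summand of H (i.e., L = R·x for some x ∈ H, and H = L ⊕ H' for some submodule H'). Then there exist R-linear functionals φ_1, …, φ_{r−1} : H → R such that the induced contraction map ⋀^r_R H → H, given on elementary wedges by v_1 ∧ ⋯ ∧ v_r ↦ Σ_{i=1}^r (−1)^{i−1} det(φ_j(v_k))_{1 ≤ j ≤ r−1, k ≠ i} · v_i, is injective with image exactly L. -/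
/-!
Split `H = L ⊕ H'`. Over a local ring the direct summand `H'` of a finite free module is
free, necessarily of rank `m`, so `x` extends to a basis `b` of `H` with `b 0 = x`. Take
`φ j` to be the coordinate functionals `b.coord (j + 1)`. Laplace expansion (column `0` of
`A * adj A = det A • 1`) shows that the contraction of `v` is `det_b(v) • x`. Since
`⋀^{m+1} H ≅ R` via `det_b`, and `r ↦ r • x` is injective with image `L` because `L` is free,
the contraction is injective with image `L`.
-/

open Module

section

variable {R M : Type*} [CommRing R] [AddCommGroup M] [Module R M]

theorem LinearMap.toSpanSingleton_injective_of_basis {ι : Type*} [Nonempty ι] {x : M}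
    (e : Basis ι R (Submodule.span R {x})) :
    Function.Injective (LinearMap.toSpanSingleton R M x) := by
  obtain ⟨i⟩ := ‹Nonempty ι›
  obtain ⟨s, hs⟩ := Submodule.mem_span_singleton.mp (e i).2
  rw [← LinearMap.ker_eq_bot, Submodule.eq_bot_iff]
  intro r (hr : r • x = 0)
  refine e.linearIndependent.smul_left_injective i (Subtype.ext ?_)
  simp [← hs, smul_comm r s, hr]

section IsCompl

variable {N N' : Submodule R M}

theorem Submodule.finite_of_isCompl [Module.Finite R M] (h : IsCompl N N') :
    Module.Finite R N' :=
  .of_surjective _ (N'.projectionOnto_surjective h.symm)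

theorem Submodule.free_of_isCompl [IsLocalRing R] [Module.Free R M] [Module.Finite R M]
    (h : IsCompl N N') : Module.Free R N' := by
  have : Module.Projective R N' := .of_split N'.subtype (N'.projectionOnto N h.symm)
    (LinearMap.ext (N'.projectionOnto_apply_left h.symm))
  have := Submodule.finite_of_isCompl h
  have := Module.finitePresentation_of_projective R N'
  exact Module.free_of_flat_of_isLocalRing

theorem Submodule.finrank_add_finrank_of_isCompl [StrongRankCondition R]
    [Module.Free R N] [Module.Free R N'] [Module.Finite R N] [Module.Finite R N']
    (h : IsCompl N N') : finrank R N + finrank R N' = finrank R M := by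
  rw [← finrank_prod, (Submodule.prodEquivOfIsCompl N N' h).finrank_eq]

end IsCompl

theorem Module.Basis.exists_basis_apply_zero_eq_of_isCompl [IsLocalRing R] {m : ℕ}
    (bM : Basis (Fin (m + 1)) R M) {x : M} (e : Basis (Fin 1) R (Submodule.span R {x}))
    {N : Submodule R M} (h : IsCompl (Submodule.span R {x}) N) :
    ∃ b : Basis (Fin (m + 1)) R M, b 0 = x := by
  have := Module.Free.of_basis bM
  have := Module.Finite.of_basis bM
  have := Module.Free.of_basis e
  have := Module.Finite.of_basis e
  have := Submodule.free_of_isCompl h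
  have := Submodule.finite_of_isCompl h
  have hrank : finrank R N = m := by
    have := Submodule.finrank_add_finrank_of_isCompl h
    rw [finrank_eq_card_basis e, finrank_eq_card_basis bM, Fintype.card_fin,
      Fintype.card_fin] at this
    omega
  have hx := LinearMap.toSpanSingleton_injective_of_basis e
  refine ⟨.mkFinCons x (finBasisOfFinrankEq R N hrank) (fun c y hy hcy => ?_) (fun z => ?_),
    by simp⟩
  · have hcx : c • x ∈ Submodule.span R {x} ⊓ N :=
      ⟨Submodule.smul_mem _ c (Submodule.mem_span_singleton_self x),
        eq_neg_of_add_eq_zero_left hcy ▸ N.neg_mem hy⟩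
    rw [h.inf_eq_bot, Submodule.mem_bot] at hcx
    exact hx (by simpa using hcx)
  · obtain ⟨l, hl, y, hy, rfl⟩ := Submodule.mem_sup.mp (h.sup_eq_top ▸ Submodule.mem_top (x := z))
    obtain ⟨a, rfl⟩ := Submodule.mem_span_singleton.mp hl
    exact ⟨-a, by simpa [add_comm, ← add_assoc] using hy⟩

theorem AlternatingMap.apply_eq_basis_det_smul {N ι : Type*} [AddCommGroup N] [Module R N]
    [Fintype ι] [DecidableEq ι] (f : M [⋀^ι]→ₗ[R] N) (b : Basis ι R M) (v : ι → M) :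
    f v = b.det v • f b := by
  suffices f = (LinearMap.toSpanSingleton R N (f b)).compAlternatingMap b.det from
    congr($this v)
  refine b.ext_alternating fun i h => ?_
  let σ : Equiv.Perm ι := Equiv.ofBijective i (Finite.injective_iff_bijective.1 h)
  change f (b ∘ σ) = LinearMap.toSpanSingleton R N (f b) (b.det (b ∘ σ))
  simp [AlternatingMap.map_perm, Basis.det_self, Units.smul_def, Int.cast_smul_eq_zsmul]

namespace Module.Basis

variable {n : ℕ} (b : Basis (Fin n) R M)

noncomputable def topExteriorPowerEquiv : ⋀[R]^n M ≃ₗ[R] R :=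
  .ofLinearMap (exteriorPower.alternatingMapLinearEquiv b.det)
    (LinearMap.toSpanSingleton R _ (exteriorPower.ιMulti R n b))
    (LinearMap.ext_ring (by simp [b.det_self]))
    (exteriorPower.linearMap_ext (AlternatingMap.ext fun v => by
      simp [← (exteriorPower.ιMulti R n).apply_eq_basis_det_smul b v]))

@[simp]
theorem topExteriorPowerEquiv_ιMulti (v : Fin n → M) :
    b.topExteriorPowerEquiv (exteriorPower.ιMulti R n v) = b.det v := by
  simp [topExteriorPowerEquiv]

end Module.Basis

theorem Matrix.sum_neg_one_pow_mul_det_submatrix_succ_mul {m : ℕ}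
    (A : Matrix (Fin (m + 1)) (Fin (m + 1)) R) (j : Fin (m + 1)) :
    ∑ i : Fin (m + 1), (-1) ^ (i : ℕ) * (A.submatrix Fin.succ i.succAbove).det * A j i =
      if j = 0 then A.det else 0 := by
  calc _ = (A * A.adjugate) j 0 := by
        simp [Matrix.mul_apply, Matrix.adjugate_fin_succ_eq_det_submatrix, mul_comm]
    _ = _ := by simp [Matrix.mul_adjugate, Matrix.one_apply]

def wedgeContract {m : ℕ} (φ : Fin m → Dual R M) (v : Fin (m + 1) → M) : M :=
  ∑ i : Fin (m + 1),
    ((-1 : R) ^ (i : ℕ) * (Matrix.of fun j k => φ j (v (i.succAbove k))).det) • v i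

theorem Module.Basis.wedgeContract_coord_succ {m : ℕ} (b : Basis (Fin (m + 1)) R M)
    (v : Fin (m + 1) → M) : wedgeContract (fun j => b.coord j.succ) v = b.det v • b 0 := by
  refine b.ext_elem fun j => ?_
  simp only [wedgeContract, map_sum, map_smul, Finsupp.coe_finsetSum, Finset.sum_apply,
    Finsupp.smul_apply, smul_eq_mul, Basis.repr_self, Finsupp.single_apply, mul_ite, mul_one,
    mul_zero, eq_comm (a := (0 : Fin _)), Basis.det_apply]
  exact Matrix.sum_neg_one_pow_mul_det_submatrix_succ_mul (b.toMatrix v) j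

end

/-- The single-level content of Proposition 3.2(i) of the paper: let `R` be a commutative
local ring, `H` a free `R`-module of rank `r = m + 1 ≥ 1` and `L ⊆ H` a free rank-one
direct summand (`L = R·x` and `L` has a complement in `H`).  Then there are linear
functionals `φ 0, …, φ (m-1) : H →ₗ[R] R` such that the induced contraction map
`⋀^r H → H`, sending an elementary wedge `v_1 ∧ ⋯ ∧ v_r` to
`∑ i (-1)^(i-1) det(φ_j (v_k))_{j, k ≠ i} • v_i`, is injective with image exactly `L`. -/
theorem exists_contraction_onto_rank_one_summand
    {R : Type*} [CommRing R] [IsLocalRing R]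
    {H : Type*} [AddCommGroup H] [Module R H] (m : ℕ)
    (hH : Nonempty (Module.Basis (Fin (m + 1)) R H))
    (L : Submodule R H) (x : H) (hLx : L = Submodule.span R {x})
    (hLfree : Nonempty (Module.Basis (Fin 1) R L))
    (hcompl : ∃ H' : Submodule R H, IsCompl L H') :
    ∃ (φ : Fin m → (H →ₗ[R] R)) (c : (⋀[R]^(m + 1) H) →ₗ[R] H),
      (∀ v : Fin (m + 1) → H,
        c ⟨ExteriorAlgebra.ιMulti R (m + 1) v,
            ExteriorAlgebra.ιMulti_range R (m + 1) (Set.mem_range_self v)⟩ =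
          ∑ i : Fin (m + 1),
            ((-1 : R) ^ (i : ℕ) *
              Matrix.det (Matrix.of fun j k : Fin m => φ j (v (i.succAbove k)))) • v i) ∧
      Function.Injective c ∧ LinearMap.range c = L := by
  obtain ⟨bH⟩ := hH
  obtain ⟨e⟩ := hLfree
  obtain ⟨H', hc⟩ := hcompl
  subst hLx
  obtain ⟨b, rfl⟩ := bH.exists_basis_apply_zero_eq_of_isCompl e hc
  refine ⟨fun j => b.coord j.succ,
    LinearMap.toSpanSingleton R H (b 0) ∘ₗ b.topExteriorPowerEquiv.toLinearMap, fun v => ?_,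
    (LinearMap.toSpanSingleton_injective_of_basis e).comp b.topExteriorPowerEquiv.injective, ?_⟩
  · change b.topExteriorPowerEquiv (exteriorPower.ιMulti R (m + 1) v) • b 0 = wedgeContract _ v
    rw [b.topExteriorPowerEquiv_ιMulti, b.wedgeContract_coord_succ]
  · rw [LinearMap.range_comp_of_range_eq_top _ b.topExteriorPowerEquiv.range,
      LinearMap.span_singleton_eq_range]
end
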